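/- Let γ: Cl(V,h) → End_ℂ(S) be a weakly faithful complex Clifford representation. Then the map sending an automorphism (φ₀,φ) of γ (an isomorphism of complex Clifford representations from γ to itself) to its second component φ is a group isomorphism from the automorphism group of γ onto the complex Lipschitz group L_γ = {φ ∈ Aut_ℂ(S) : φ∘γ(ι(V))∘φ^{-1} = γ(ι(V))}. -/

import Mathlib

noncomputable section

namespace CpxCliffordRep

/-- The image `γ(ι(V))` of `V` in `End_ℂ(S)` under a complex Clifford representation. -/
def gammaV {V : Type*} [AddCommGroup V] [Module ℝ V]
    {S : Type*} [AddCommGroup S] [Module ℝ S] [Module ℂ S] [IsScalarTower ℝ ℂ S]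
    (Q : QuadraticForm ℝ V) (γ : CliffordAlgebra Q →ₐ[ℝ] Module.End ℂ S) :
    Set (Module.End ℂ S) :=
  Set.range fun v : V => γ (CliffordAlgebra.ι Q v)

/-- A complex Clifford representation is weakly faithful if `v ↦ γ(ι(v))` is injective. -/
def WeaklyFaithful {V : Type*} [AddCommGroup V] [Module ℝ V]
    {S : Type*} [AddCommGroup S] [Module ℝ S] [Module ℂ S] [IsScalarTower ℝ ℂ S]
    (Q : QuadraticForm ℝ V) (γ : CliffordAlgebra Q →ₐ[ℝ] Module.End ℂ S) : Prop :=
  Function.Injective fun v : V => γ (CliffordAlgebra.ι Q v)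

/-- Conjugation `A ↦ φ ∘ A ∘ φ⁻¹` by a ℂ-linear isomorphism `φ : S ≃ S'`. -/
def conjMap {S S' : Type*} [AddCommGroup S] [Module ℂ S] [AddCommGroup S'] [Module ℂ S']
    (φ : S ≃ₗ[ℂ] S') (A : Module.End ℂ S) : Module.End ℂ S' :=
  φ.toLinearMap ∘ₗ A ∘ₗ φ.symm.toLinearMap

/-- `(φ₀, φ)` is a morphism of complex Clifford representations from `γ` to `γ'`:
`φ₀` is an isometry from `(V,h)` to `(V',h')` and
`γ'(Cl(φ₀)(x)) ∘ φ = φ ∘ γ(x)` for all `x ∈ Cl(V,h)`, where `Cl(φ₀)` is the (unique)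
unital algebra morphism induced by `φ₀`, characterized by `Cl(φ₀)(ι(v)) = ι'(φ₀(v))`. -/
def IsRepMor {V V' : Type*} [AddCommGroup V] [Module ℝ V] [AddCommGroup V'] [Module ℝ V']
    {S S' : Type*} [AddCommGroup S] [Module ℝ S] [Module ℂ S] [IsScalarTower ℝ ℂ S]
    [AddCommGroup S'] [Module ℝ S'] [Module ℂ S'] [IsScalarTower ℝ ℂ S']
    (h : LinearMap.BilinForm ℝ V) (h' : LinearMap.BilinForm ℝ V')
    (γ : CliffordAlgebra h.toQuadraticMap →ₐ[ℝ] Module.End ℂ S)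
    (γ' : CliffordAlgebra h'.toQuadraticMap →ₐ[ℝ] Module.End ℂ S')
    (φ₀ : V →ₗ[ℝ] V') (φ : S →ₗ[ℂ] S') : Prop :=
  (∀ v w : V, h' (φ₀ v) (φ₀ w) = h v w) ∧
  ∃ Φ : CliffordAlgebra h.toQuadraticMap →ₐ[ℝ] CliffordAlgebra h'.toQuadraticMap,
    (∀ v : V, Φ (CliffordAlgebra.ι h.toQuadraticMap v) =
        CliffordAlgebra.ι h'.toQuadraticMap (φ₀ v)) ∧
    ∀ x : CliffordAlgebra h.toQuadraticMap, (γ' (Φ x)) ∘ₗ φ = φ ∘ₗ (γ x)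

/-- Membership in the complex Lipschitz group `L_γ` of a (weakly faithful) complex Clifford
representation: conjugation by `φ` preserves `γ(ι(V))`. -/
def memLip {V : Type*} [AddCommGroup V] [Module ℝ V]
    {S : Type*} [AddCommGroup S] [Module ℝ S] [Module ℂ S] [IsScalarTower ℝ ℂ S]
    (Q : QuadraticForm ℝ V) (γ : CliffordAlgebra Q →ₐ[ℝ] Module.End ℂ S)
    (φ : S ≃ₗ[ℂ] S) : Prop :=
  conjMap φ '' gammaV Q γ = gammaV Q γ

/-- A complex Clifford representation is irreducible if the only invariant complex
subspaces of `S` are `0` and `S`. -/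
def IsIrred {V : Type*} [AddCommGroup V] [Module ℝ V]
    {S : Type*} [AddCommGroup S] [Module ℝ S] [Module ℂ S] [IsScalarTower ℝ ℂ S]
    (Q : QuadraticForm ℝ V) (γ : CliffordAlgebra Q →ₐ[ℝ] Module.End ℂ S) : Prop :=
  ∀ W : Submodule ℂ S, (∀ (x : CliffordAlgebra Q), ∀ w ∈ W, γ x w ∈ W) → W = ⊥ ∨ W = ⊤

/-- `(V,h)` has signature `(p,q)`: there is a basis `e₁,…,e_{p+q}` with
`h(eᵢ,eⱼ) = 0` for `i ≠ j`, `h(eᵢ,eᵢ) = 1` for `i ≤ p` and `h(eᵢ,eᵢ) = -1` for `i > p`. -/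
def HasSignature {V : Type*} [AddCommGroup V] [Module ℝ V]
    (h : LinearMap.BilinForm ℝ V) (p q : ℕ) : Prop :=
  ∃ b : Module.Basis (Fin (p + q)) ℝ V, ∀ i j : Fin (p + q),
    h (b i) (b j) = if i = j then (if (i : ℕ) < p then 1 else -1) else 0

end CpxCliffordRep

/-!
An automorphism `(φ₀, φ)` of `γ` is pinned down on generators:
`φ ∘ γ(ι v) ∘ φ⁻¹ = γ(ι(φ₀ v))`. Hence conjugation by `φ` preserves `γ(ι(V))`, and weak
faithfulness recovers `φ₀` from `φ`. Conversely, for `φ ∈ L_γ` weak faithfulness transports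
conjugation by `φ` on `γ(ι(V)) ≅ V` to a linear automorphism `φ₀` of `V`. Squaring,
`γ(ι v)² = h(v,v)`, shows that `φ₀` preserves the quadratic form, hence `h` by polarization,
and `Cl(φ₀)` intertwines `γ` with itself because `x ↦ γ(Cl(φ₀) x)` and `x ↦ φ γ(x) φ⁻¹` are
algebra homomorphisms agreeing on `ι(V)`.
-/

open CliffordAlgebra

theorem LinearMap.BilinForm.IsSymm.isometry_apply_apply
    {R V V' : Type*} [CommRing R] [Invertible (2 : R)]
    [AddCommGroup V] [Module R V] [AddCommGroup V'] [Module R V']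
    {h : LinearMap.BilinForm R V} {h' : LinearMap.BilinForm R V'}
    (hh : h.IsSymm) (hh' : h'.IsSymm) (f : h.toQuadraticMap →qᵢ h'.toQuadraticMap) (v w : V) :
    h' (f v) (f w) = h v w := by
  have hcomp : h'.toQuadraticMap.comp f.toLinearMap = h.toQuadraticMap :=
    QuadraticMap.ext f.map_app
  calc h' (f v) (f w)
      = QuadraticMap.associated h'.toQuadraticMap (f v) (f w) := by
        rw [QuadraticMap.associated_left_inverse _ hh'.eq]
    _ = QuadraticMap.associated (h'.toQuadraticMap.comp f.toLinearMap) v w := by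
        rw [QuadraticMap.associated_comp]; rfl
    _ = h v w := by rw [hcomp, QuadraticMap.associated_left_inverse _ hh.eq]

theorem LinearMap.exists_linearEquiv_comp_eq_of_image_range
    {R M N : Type*} [Semiring R] [AddCommMonoid M] [Module R M] [AddCommMonoid N] [Module R N]
    (f : M →ₗ[R] N) (hf : Function.Injective f) (c : N ≃ₗ[R] N)
    (hc : c '' Set.range f = Set.range f) :
    ∃ L : M ≃ₗ[R] M, ∀ m, f (L m) = c (f m) := by
  have hmap : (range f).map (c : N →ₗ[R] N) = range f :=
    SetLike.coe_injective (by rw [Submodule.map_coe, LinearMap.coe_range]; exact hc)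
  let e := LinearEquiv.ofInjective f hf
  exact ⟨e.trans ((c.submoduleMap _).trans ((LinearEquiv.ofEq _ _ hmap).trans e.symm)),
    fun m => by simp [e]⟩

namespace CpxCliffordRep

section Conj

variable {S S' : Type*} [AddCommGroup S] [Module ℂ S] [AddCommGroup S'] [Module ℂ S']

theorem conjMap_eq_conjAlgEquiv [Module ℝ S] [IsScalarTower ℝ ℂ S] [Module ℝ S']
    [IsScalarTower ℝ ℂ S'] (φ : S ≃ₗ[ℂ] S') : conjMap φ = φ.conjAlgEquiv ℝ := rfl

theorem conjMap_eq_iff (φ : S ≃ₗ[ℂ] S') (A : Module.End ℂ S) (B : Module.End ℂ S') :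
    conjMap φ A = B ↔ B ∘ₗ φ.toLinearMap = φ.toLinearMap ∘ₗ A := by
  unfold conjMap
  constructor
  · rintro rfl; ext; simp
  · rintro hB; ext s; simpa using (LinearMap.congr_fun hB (φ.symm s)).symm

end Conj

variable {V V' V'' : Type*} [AddCommGroup V] [Module ℝ V] [AddCommGroup V'] [Module ℝ V']
  [AddCommGroup V''] [Module ℝ V'']
  {S S' S'' : Type*} [AddCommGroup S] [Module ℝ S] [Module ℂ S] [IsScalarTower ℝ ℂ S]
  [AddCommGroup S'] [Module ℝ S'] [Module ℂ S'] [IsScalarTower ℝ ℂ S']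
  [AddCommGroup S''] [Module ℝ S''] [Module ℂ S''] [IsScalarTower ℝ ℂ S'']

theorem IsRepMor.comp {h : LinearMap.BilinForm ℝ V} {h' : LinearMap.BilinForm ℝ V'}
    {h'' : LinearMap.BilinForm ℝ V''}
    {γ : CliffordAlgebra h.toQuadraticMap →ₐ[ℝ] Module.End ℂ S}
    {γ' : CliffordAlgebra h'.toQuadraticMap →ₐ[ℝ] Module.End ℂ S'}
    {γ'' : CliffordAlgebra h''.toQuadraticMap →ₐ[ℝ] Module.End ℂ S''}
    {φ₀ : V' →ₗ[ℝ] V''} {φ : S' →ₗ[ℂ] S''} {ψ₀ : V →ₗ[ℝ] V'} {ψ : S →ₗ[ℂ] S'}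
    (hφ : IsRepMor h' h'' γ' γ'' φ₀ φ) (hψ : IsRepMor h h' γ γ' ψ₀ ψ) :
    IsRepMor h h'' γ γ'' (φ₀ ∘ₗ ψ₀) (φ ∘ₗ ψ) := by
  obtain ⟨hφiso, Φ, hΦι, hΦ⟩ := hφ
  obtain ⟨hψiso, Ψ, hΨι, hΨ⟩ := hψ
  refine ⟨fun v w => (hφiso _ _).trans (hψiso v w), Φ.comp Ψ, fun v => ?_, fun x => ?_⟩
  · simp [hΨι, hΦι]
  · rw [AlgHom.comp_apply, ← LinearMap.comp_assoc, hΦ, LinearMap.comp_assoc, hΨ,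
      LinearMap.comp_assoc]

theorem isRepMor_iff {h : LinearMap.BilinForm ℝ V} {h' : LinearMap.BilinForm ℝ V'}
    {γ : CliffordAlgebra h.toQuadraticMap →ₐ[ℝ] Module.End ℂ S}
    {γ' : CliffordAlgebra h'.toQuadraticMap →ₐ[ℝ] Module.End ℂ S'}
    (φ₀ : V →ₗ[ℝ] V') (φ : S ≃ₗ[ℂ] S') :
    IsRepMor h h' γ γ' φ₀ φ.toLinearMap ↔ (∀ v w, h' (φ₀ v) (φ₀ w) = h v w) ∧
      ∀ v, conjMap φ (γ (ι _ v)) = γ' (ι _ (φ₀ v)) := by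
  refine ⟨fun ⟨hiso, Φ, hΦι, hΦ⟩ => ⟨hiso, fun v => ?_⟩, fun ⟨hiso, hconj⟩ => ⟨hiso, ?_⟩⟩
  · rw [conjMap_eq_iff, ← hΦι]
    exact hΦ _
  · let f : h.toQuadraticMap →qᵢ h'.toQuadraticMap := ⟨φ₀, fun v => hiso v v⟩
    rw [conjMap_eq_conjAlgEquiv] at hconj
    have hγ : (φ.conjAlgEquiv ℝ).toAlgHom.comp γ = γ'.comp (map f) :=
      hom_ext (LinearMap.ext fun v => by simp [map_apply_ι]; exact hconj v)
    exact ⟨map f, map_apply_ι f, fun x => (conjMap_eq_iff _ _ _).mp (AlgHom.congr_fun hγ x)⟩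

theorem quadraticMap_eq_of_conjMap_eq [Nontrivial S'] {Q : QuadraticForm ℝ V}
    {Q' : QuadraticForm ℝ V'} {γ : CliffordAlgebra Q →ₐ[ℝ] Module.End ℂ S}
    {γ' : CliffordAlgebra Q' →ₐ[ℝ] Module.End ℂ S'} {φ : S ≃ₗ[ℂ] S'} {L : V → V'}
    (hL : ∀ v, γ' (ι Q' (L v)) = conjMap φ (γ (ι Q v))) (v : V) : Q' (L v) = Q v := by
  apply (algebraMap ℝ (Module.End ℂ S')).injective
  calc algebraMap ℝ _ (Q' (L v)) = γ' (ι Q' (L v)) * γ' (ι Q' (L v)) := by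
        rw [← map_mul, ι_sq_scalar, AlgHom.commutes]
    _ = φ.conjAlgEquiv ℝ (γ (ι Q v * ι Q v)) := by
        rw [hL, conjMap_eq_conjAlgEquiv, map_mul, map_mul]
    _ = algebraMap ℝ _ (Q v) := by rw [ι_sq_scalar, AlgHom.commutes, AlgEquiv.commutes]

theorem memLip_of_conjMap_eq {Q : QuadraticForm ℝ V} {γ : CliffordAlgebra Q →ₐ[ℝ] Module.End ℂ S}
    {φ : S ≃ₗ[ℂ] S} {g : V → V} (hg : Function.Surjective g)
    (hconj : ∀ v, conjMap φ (γ (ι Q v)) = γ (ι Q (g v))) : memLip Q γ φ := by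
  unfold memLip gammaV
  rw [← Set.range_comp, show conjMap φ ∘ _ = (fun v => γ (ι Q v)) ∘ g from funext hconj,
    hg.range_comp]

theorem exists_linearEquiv_conjMap_eq_of_memLip {Q : QuadraticForm ℝ V}
    {γ : CliffordAlgebra Q →ₐ[ℝ] Module.End ℂ S} (hγ : WeaklyFaithful Q γ) {φ : S ≃ₗ[ℂ] S}
    (hφ : memLip Q γ φ) : ∃ L : V ≃ₗ[ℝ] V, ∀ v, γ (ι Q (L v)) = conjMap φ (γ (ι Q v)) :=
  LinearMap.exists_linearEquiv_comp_eq_of_image_range (γ.toLinearMap ∘ₗ ι Q) hγ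
    (φ.conjAlgEquiv ℝ).toLinearEquiv hφ

end CpxCliffordRep

open CpxCliffordRep in
theorem automorphism_group_iso_lipschitz_group_general
    {V : Type*} [AddCommGroup V] [Module ℝ V]
    {S : Type*} [AddCommGroup S] [Module ℝ S] [Module ℂ S] [IsScalarTower ℝ ℂ S]
    [Nontrivial S]
    (h : LinearMap.BilinForm ℝ V) (hsymm : h.IsSymm)
    (γ : CliffordAlgebra h.toQuadraticMap →ₐ[ℝ] Module.End ℂ S)
    (hγ : WeaklyFaithful h.toQuadraticMap γ) :
    -- well defined: the second component of any automorphism of `γ` lies in `L_γ`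
    (∀ (φ₀ : V ≃ₗ[ℝ] V) (φ : S ≃ₗ[ℂ] S),
        IsRepMor h h γ γ φ₀.toLinearMap φ.toLinearMap → memLip h.toQuadraticMap γ φ) ∧
    -- multiplicative: automorphisms compose componentwise
    (∀ (φ₀ ψ₀ : V ≃ₗ[ℝ] V) (φ ψ : S ≃ₗ[ℂ] S),
        IsRepMor h h γ γ φ₀.toLinearMap φ.toLinearMap →
        IsRepMor h h γ γ ψ₀.toLinearMap ψ.toLinearMap →
        IsRepMor h h γ γ (φ₀.toLinearMap ∘ₗ ψ₀.toLinearMap)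
          (φ.toLinearMap ∘ₗ ψ.toLinearMap)) ∧
    -- injective: the first component is determined by the second
    (∀ (φ₀ ψ₀ : V ≃ₗ[ℝ] V) (φ : S ≃ₗ[ℂ] S),
        IsRepMor h h γ γ φ₀.toLinearMap φ.toLinearMap →
        IsRepMor h h γ γ ψ₀.toLinearMap φ.toLinearMap → φ₀ = ψ₀) ∧
    -- surjective onto `L_γ`
    (∀ φ : S ≃ₗ[ℂ] S, memLip h.toQuadraticMap γ φ →
        ∃ φ₀ : V ≃ₗ[ℝ] V, IsRepMor h h γ γ φ₀.toLinearMap φ.toLinearMap) := by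
  refine ⟨fun φ₀ φ hφ => ?_, fun φ₀ ψ₀ φ ψ hφ hψ => hφ.comp hψ, fun φ₀ ψ₀ φ hφ hψ => ?_,
    fun φ hφ => ?_⟩
  · exact memLip_of_conjMap_eq φ₀.surjective ((isRepMor_iff _ _).mp hφ).2
  · ext v
    apply hγ
    exact (((isRepMor_iff _ _).mp hφ).2 v).symm.trans (((isRepMor_iff _ _).mp hψ).2 v)
  · obtain ⟨L, hL⟩ := exists_linearEquiv_conjMap_eq_of_memLip hγ hφ
    let f : h.toQuadraticMap →qᵢ h.toQuadraticMap :=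
      ⟨L.toLinearMap, quadraticMap_eq_of_conjMap_eq hL⟩
    exact ⟨L, (isRepMor_iff _ _).mpr
      ⟨hsymm.isometry_apply_apply hsymm f, fun v => (hL v).symm⟩⟩

open CpxCliffordRep in
/-- For a weakly faithful complex Clifford representation `γ`, the map sending an
automorphism `(φ₀,φ)` of `γ` to its second component `φ` is a group isomorphism from the
automorphism group of `γ` onto the complex Lipschitz group
`L_γ = {φ ∈ Aut_ℂ(S) : φ∘γ(ι(V))∘φ⁻¹ = γ(ι(V))}`: it is well defined into `L_γ`,
multiplicative (automorphisms compose componentwise), injective (the first component is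
uniquely determined by the second) and surjective onto `L_γ`. -/
theorem automorphism_group_iso_lipschitz_group
    {V : Type*} [AddCommGroup V] [Module ℝ V] [FiniteDimensional ℝ V]
    {S : Type*} [AddCommGroup S] [Module ℝ S] [Module ℂ S] [IsScalarTower ℝ ℂ S]
    [FiniteDimensional ℂ S] [Nontrivial S]
    (h : LinearMap.BilinForm ℝ V) (hsymm : h.IsSymm) (hnd : h.Nondegenerate)
    (γ : CliffordAlgebra h.toQuadraticMap →ₐ[ℝ] Module.End ℂ S)
    (hγ : WeaklyFaithful h.toQuadraticMap γ) :
    -- well defined: the second component of any automorphism of `γ` lies in `L_γ`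
    (∀ (φ₀ : V ≃ₗ[ℝ] V) (φ : S ≃ₗ[ℂ] S),
        IsRepMor h h γ γ φ₀.toLinearMap φ.toLinearMap → memLip h.toQuadraticMap γ φ) ∧
    -- multiplicative: automorphisms compose componentwise
    (∀ (φ₀ ψ₀ : V ≃ₗ[ℝ] V) (φ ψ : S ≃ₗ[ℂ] S),
        IsRepMor h h γ γ φ₀.toLinearMap φ.toLinearMap →
        IsRepMor h h γ γ ψ₀.toLinearMap ψ.toLinearMap →
        IsRepMor h h γ γ (φ₀.toLinearMap ∘ₗ ψ₀.toLinearMap)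
          (φ.toLinearMap ∘ₗ ψ.toLinearMap)) ∧
    -- injective: the first component is determined by the second
    (∀ (φ₀ ψ₀ : V ≃ₗ[ℝ] V) (φ : S ≃ₗ[ℂ] S),
        IsRepMor h h γ γ φ₀.toLinearMap φ.toLinearMap →
        IsRepMor h h γ γ ψ₀.toLinearMap φ.toLinearMap → φ₀ = ψ₀) ∧
    -- surjective onto `L_γ`
    (∀ φ : S ≃ₗ[ℂ] S, memLip h.toQuadraticMap γ φ →
        ∃ φ₀ : V ≃ₗ[ℝ] V, IsRepMor h h γ γ φ₀.toLinearMap φ.toLinearMap) :=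
  automorphism_group_iso_lipschitz_group_general h hsymm γ hγ
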